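/- An ALC TBox T is satisfiable if and only if T ∪ {A ⊑ ∀r.B} (with A, B, r fresh symbols not occurring in T) is not invariant under global EL-equisimulation; i.e., T is satisfiable iff there exist models I₁, I₂ with I₁ ∼ᵍ_EL I₂ such that I₁ is a model of T ∪ {A ⊑ ∀r.B} and I₂ is not. -/

import Mathlib

structure Interp (A R : Type) where
  Dom : Type
  atom : A → Dom → Prop
  rel : R → Dom → Dom → Prop

inductive ALC (A R : Type) where
  | atom : A → ALC A R
  | neg : ALC A R → ALC A R
  | conj : ALC A R → ALC A R → ALC A R
  | ex : R → ALC A R → ALC A R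

def ALC.sat {A R : Type} (I : Interp A R) : ALC A R → I.Dom → Prop
  | ALC.atom a, d => I.atom a d
  | ALC.neg C, d => ¬ ALC.sat I C d
  | ALC.conj C D, d => ALC.sat I C d ∧ ALC.sat I D d
  | ALC.ex r C, d => ∃ e, I.rel r d e ∧ ALC.sat I C e

def ALC.atoms {A R : Type} : ALC A R → Set A
  | ALC.atom a => {a}
  | ALC.neg C => C.atoms
  | ALC.conj C D => C.atoms ∪ D.atoms
  | ALC.ex _ C => C.atoms

def ALC.roles {A R : Type} : ALC A R → Set R
  | ALC.atom _ => ∅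
  | ALC.neg C => C.roles
  | ALC.conj C D => C.roles ∪ D.roles
  | ALC.ex r C => insert r C.roles

def SatTBox {A R : Type} (I : Interp A R) (T : Set (ALC A R × ALC A R)) : Prop :=
  ∀ p ∈ T, ∀ d : I.Dom, ALC.sat I p.1 d → ALC.sat I p.2 d

inductive EL (A R : Type) where
  | top : EL A R
  | atom : A → EL A R
  | conj : EL A R → EL A R → EL A R
  | ex : R → EL A R → EL A R

def EL.sat {A R : Type} (I : Interp A R) : EL A R → I.Dom → Prop
  | EL.top, _ => True
  | EL.atom a, d => I.atom a d
  | EL.conj C D, d => EL.sat I C d ∧ EL.sat I D d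
  | EL.ex r C, d => ∃ e, I.rel r d e ∧ EL.sat I C e

def ELSim {A R : Type} (I₁ I₂ : Interp A R) (S : I₁.Dom → I₂.Dom → Prop) : Prop :=
  (∀ d₁ d₂, S d₁ d₂ → ∀ a, I₁.atom a d₁ → I₂.atom a d₂) ∧
  (∀ d₁ d₂, S d₁ d₂ → ∀ r d₁', I₁.rel r d₁ d₁' → ∃ d₂', I₂.rel r d₂ d₂' ∧ S d₁' d₂')

def ELle {A R : Type} (I₁ : Interp A R) (d₁ : I₁.Dom) (I₂ : Interp A R)
    (d₂ : I₂.Dom) : Prop :=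
  ∃ S, ELSim I₁ I₂ S ∧ S d₁ d₂

/-- Global EL-equisimulation `I₁ ∼ᵍ_EL I₂`. -/
def GlobalELEqui {A R : Type} (I₁ I₂ : Interp A R) : Prop :=
  (∀ d₁ : I₁.Dom, ∃ d₂ : I₂.Dom, ELle I₁ d₁ I₂ d₂ ∧ ELle I₂ d₂ I₁ d₁) ∧
  (∀ d₂ : I₂.Dom, ∃ d₁ : I₁.Dom, ELle I₁ d₁ I₂ d₂ ∧ ELle I₂ d₂ I₁ d₁)

/-- `I` is a model of `T ∪ {A ⊑ ∀r.B}` where `Aa`, `Bb`, `rr` are the fresh symbols. -/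
def SatExt {A R : Type} (T : Set (ALC A R × ALC A R)) (Aa Bb : A) (rr : R)
    (I : Interp A R) : Prop :=
  SatTBox I T ∧ ∀ d e : I.Dom, I.atom Aa d → I.rel rr d e → I.atom Bb e

/-!
Take a model `I` of `T` and a three-element gadget on the fresh symbols: `0` is an `A`, `1` is a
`B`, and the `r`-successors of `0` are `{1}` in one version and `{1, 2}` in the other. The two
gadgets are globally EL-equisimilar (`2` is simulated by `1`, which carries more atoms), but only
the first satisfies `A ⊑ ∀r.B`. Reading the symbols of `T` from `I` and the fresh ones from the
gadget, on `I.Dom × Fin 3`, gives two models of `T` that inherit exactly these properties.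
Conversely, an interpretation refuting the extended TBox is nonempty, hence so is any
interpretation globally equisimilar to it.
-/

/-- `I ⊨ Aa ⊑ ∀ rr. Bb`. -/
def SatValueRestriction {A R : Type} (I : Interp A R) (Aa Bb : A) (rr : R) : Prop :=
  ∀ d e : I.Dom, I.atom Aa d → I.rel rr d e → I.atom Bb e

namespace Interp

variable {A R : Type}

open Classical in
def splice (I K : Interp A R) (FA : Set A) (FR : Set R) : Interp A R where
  Dom := I.Dom × K.Dom
  atom a p := if a ∈ FA then K.atom a p.2 else I.atom a p.1
  rel r p q := if r ∈ FR then p.1 = q.1 ∧ K.rel r p.2 q.2 else I.rel r p.1 q.1 ∧ p.2 = q.2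

variable (I K : Interp A R) {FA : Set A} {FR : Set R}

theorem splice_atom_of_mem {a : A} (ha : a ∈ FA) (p : (I.splice K FA FR).Dom) :
    (I.splice K FA FR).atom a p ↔ K.atom a p.2 := by
  simp [splice, ha]

theorem splice_atom_of_notMem {a : A} (ha : a ∉ FA) (p : (I.splice K FA FR).Dom) :
    (I.splice K FA FR).atom a p ↔ I.atom a p.1 := by
  simp [splice, ha]

theorem splice_rel_of_mem {r : R} (hr : r ∈ FR) (p q : (I.splice K FA FR).Dom) :
    (I.splice K FA FR).rel r p q ↔ p.1 = q.1 ∧ K.rel r p.2 q.2 := by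
  simp [splice, hr]

theorem splice_rel_of_notMem {r : R} (hr : r ∉ FR) (p q : (I.splice K FA FR).Dom) :
    (I.splice K FA FR).rel r p q ↔ I.rel r p.1 q.1 ∧ p.2 = q.2 := by
  simp [splice, hr]

theorem sat_splice_iff {C : ALC A R} (hA : Disjoint C.atoms FA) (hR : Disjoint C.roles FR)
    (p : (I.splice K FA FR).Dom) : ALC.sat (I.splice K FA FR) C p ↔ ALC.sat I C p.1 := by
  induction C generalizing p with
  | atom a => exact splice_atom_of_notMem I K (Set.disjoint_singleton_left.mp hA) p
  | neg C ih => exact not_congr (ih hA hR p)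
  | conj C D ihC ihD =>
    rw [ALC.atoms, Set.disjoint_union_left] at hA
    rw [ALC.roles, Set.disjoint_union_left] at hR
    exact and_congr (ihC hA.1 hR.1 p) (ihD hA.2 hR.2 p)
  | ex r C ih =>
    rw [ALC.roles, Set.disjoint_insert_left] at hR
    simp only [ALC.sat, splice_rel_of_notMem I K hR.1]
    constructor
    · rintro ⟨q, ⟨hpq, -⟩, hC⟩
      exact ⟨q.1, hpq, (ih hA hR.2 q).mp hC⟩
    · rintro ⟨e, hpe, hC⟩
      exact ⟨(e, p.2), ⟨hpe, rfl⟩, (ih hA hR.2 (e, p.2)).mpr hC⟩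

theorem satTBox_splice {T : Set (ALC A R × ALC A R)}
    (hT : ∀ C ∈ T, Disjoint C.1.atoms FA ∧ Disjoint C.2.atoms FA ∧
      Disjoint C.1.roles FR ∧ Disjoint C.2.roles FR)
    (hI : SatTBox I T) : SatTBox (I.splice K FA FR) T := by
  intro C hC p
  obtain ⟨hA₁, hA₂, hR₁, hR₂⟩ := hT C hC
  rw [sat_splice_iff I K hA₁ hR₁, sat_splice_iff I K hA₂ hR₂]
  exact hI C hC p.1

theorem satValueRestriction_splice_iff [Nonempty I.Dom] {Aa Bb : A} {rr : R}
    (hAa : Aa ∈ FA) (hBb : Bb ∈ FA) (hrr : rr ∈ FR) :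
    SatValueRestriction (I.splice K FA FR) Aa Bb rr ↔ SatValueRestriction K Aa Bb rr := by
  simp only [SatValueRestriction, splice_atom_of_mem I K hAa, splice_atom_of_mem I K hBb,
    splice_rel_of_mem I K hrr]
  constructor
  · intro h i j hi hij
    let d : I.Dom := Classical.arbitrary _
    exact h (d, i) (d, j) hi ⟨rfl, hij⟩
  · rintro h p q hp ⟨-, hpq⟩
    exact h p.2 q.2 hp hpq

end Interp

section Simulation

variable {A R : Type} (I : Interp A R) {K K' : Interp A R} (FA : Set A) (FR : Set R)

theorem ELSim.splice {Q : K.Dom → K'.Dom → Prop} (hQ : ELSim K K' Q) :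
    ELSim (I.splice K FA FR) (I.splice K' FA FR) (fun p q => p.1 = q.1 ∧ Q p.2 q.2) := by
  refine ⟨fun p q ⟨hpq, hQpq⟩ a => ?_, fun p q ⟨hpq, hQpq⟩ r p' => ?_⟩
  · by_cases ha : a ∈ FA
    · rw [Interp.splice_atom_of_mem I K ha, Interp.splice_atom_of_mem I K' ha]
      exact hQ.1 _ _ hQpq a
    · rw [Interp.splice_atom_of_notMem I K ha, Interp.splice_atom_of_notMem I K' ha, hpq]
      exact id
  · by_cases hr : r ∈ FR
    · rw [Interp.splice_rel_of_mem I K hr]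
      rintro ⟨hpp', hrel⟩
      obtain ⟨j', hj', hQ'⟩ := hQ.2 _ _ hQpq r _ hrel
      exact ⟨(q.1, j'), (Interp.splice_rel_of_mem I K' hr _ _).mpr ⟨rfl, hj'⟩, hpp' ▸ hpq, hQ'⟩
    · rw [Interp.splice_rel_of_notMem I K hr]
      rintro ⟨hrel, hpp'⟩
      exact ⟨(p'.1, q.2), (Interp.splice_rel_of_notMem I K' hr _ _).mpr ⟨hpq ▸ hrel, rfl⟩, rfl,
        hpp' ▸ hQpq⟩

theorem ELle.splice {i : K.Dom} {j : K'.Dom} (h : ELle K i K' j) (d : I.Dom) :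
    ELle (I.splice K FA FR) (d, i) (I.splice K' FA FR) (d, j) :=
  let ⟨_, hQ, hij⟩ := h
  ⟨_, hQ.splice I FA FR, rfl, hij⟩

theorem GlobalELEqui.splice (h : GlobalELEqui K K') :
    GlobalELEqui (I.splice K FA FR) (I.splice K' FA FR) := by
  refine ⟨fun ⟨d, i⟩ => ?_, fun ⟨d, j⟩ => ?_⟩
  · obtain ⟨j, hij, hji⟩ := h.1 i
    exact ⟨(d, j), hij.splice I FA FR d, hji.splice I FA FR d⟩
  · obtain ⟨i, hij, hji⟩ := h.2 j
    exact ⟨(d, i), hij.splice I FA FR d, hji.splice I FA FR d⟩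

end Simulation

section Gadget

variable {A R : Type} (Aa Bb : A) (rr : R)

def forallGadget (S : Set (Fin 3)) : Interp A R where
  Dom := Fin 3
  atom a i := (a = Aa ∧ i = 0) ∨ (a = Bb ∧ i = 1)
  rel r i j := r = rr ∧ i = 0 ∧ j ∈ S

theorem forallGadget_globalELEqui :
    GlobalELEqui (forallGadget Aa Bb rr {1}) (forallGadget Aa Bb rr {1, 2}) := by
  have forth : ELSim (forallGadget Aa Bb rr {1}) (forallGadget Aa Bb rr {1, 2})
      (fun i j : Fin 3 => i = j) := by
    refine ⟨?_, ?_⟩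
    · rintro i _ rfl a ha
      exact ha
    · rintro i _ rfl r j ⟨hr, hi, hj⟩
      exact ⟨j, ⟨hr, hi, Or.inl hj⟩, rfl⟩
  have back : ELSim (forallGadget Aa Bb rr {1, 2}) (forallGadget Aa Bb rr {1})
      (fun i j : Fin 3 => i = j ∨ (i = 2 ∧ j = 1)) := by
    refine ⟨fun (i j : Fin 3) hij a ha => ?_, fun (i j : Fin 3) hij r (k : Fin 3) hk => ?_⟩
    · simp only [forallGadget] at ha ⊢
      grind
    · simp only [forallGadget] at hk ⊢
      exact ⟨1, by grind⟩
  have hequi : ∀ i : Fin 3, ELle (forallGadget Aa Bb rr {1}) i (forallGadget Aa Bb rr {1, 2}) i ∧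
      ELle (forallGadget Aa Bb rr {1, 2}) i (forallGadget Aa Bb rr {1}) i :=
    fun i => ⟨⟨_, forth, rfl⟩, ⟨_, back, Or.inl rfl⟩⟩
  exact ⟨fun i => ⟨i, hequi i⟩, fun i => ⟨i, hequi i⟩⟩

theorem forallGadget_satValueRestriction :
    SatValueRestriction (forallGadget Aa Bb rr {1}) Aa Bb rr := by
  rintro i j - ⟨-, -, hj⟩
  exact Or.inr ⟨rfl, hj⟩

theorem forallGadget_not_satValueRestriction :
    ¬ SatValueRestriction (forallGadget Aa Bb rr {1, 2}) Aa Bb rr := by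
  intro h
  rcases h (0 : Fin 3) (2 : Fin 3) (Or.inl ⟨rfl, rfl⟩) ⟨rfl, rfl, Or.inr rfl⟩ with
    ⟨-, h⟩ | ⟨-, h⟩ <;> exact absurd h (by decide)

end Gadget

theorem satisfiable_iff_not_ELequisim_invariant_general {A R : Type}
    (T : Set (ALC A R × ALC A R))
    (Aa Bb : A) (rr : R)
    (hA : ∀ p ∈ T, Aa ∉ p.1.atoms ∧ Aa ∉ p.2.atoms)
    (hB : ∀ p ∈ T, Bb ∉ p.1.atoms ∧ Bb ∉ p.2.atoms)
    (hr : ∀ p ∈ T, rr ∉ p.1.roles ∧ rr ∉ p.2.roles) :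
    (∃ I : Interp A R, Nonempty I.Dom ∧ SatTBox I T) ↔
    (∃ I₁ I₂ : Interp A R, GlobalELEqui I₁ I₂ ∧
      SatExt T Aa Bb rr I₁ ∧ ¬ SatExt T Aa Bb rr I₂) := by
  constructor
  · rintro ⟨I, hne, hI⟩
    have hfresh : ∀ C ∈ T, Disjoint C.1.atoms {Aa, Bb} ∧ Disjoint C.2.atoms {Aa, Bb} ∧
        Disjoint C.1.roles {rr} ∧ Disjoint C.2.roles {rr} := fun C hC => by
      simp [Set.disjoint_insert_right, (hA C hC).1, (hA C hC).2, (hB C hC).1, (hB C hC).2,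
        (hr C hC).1, (hr C hC).2]
    have hsplice : ∀ S, SatValueRestriction (I.splice (forallGadget Aa Bb rr S) {Aa, Bb} {rr})
        Aa Bb rr ↔ SatValueRestriction (forallGadget Aa Bb rr S) Aa Bb rr :=
      fun S => I.satValueRestriction_splice_iff _ (by simp) (by simp) rfl
    exact ⟨_, _, (forallGadget_globalELEqui Aa Bb rr).splice I _ _,
      ⟨I.satTBox_splice _ hfresh hI, (hsplice _).mpr (forallGadget_satValueRestriction Aa Bb rr)⟩,
      fun h => forallGadget_not_satValueRestriction Aa Bb rr ((hsplice _).mp h.2)⟩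
  · rintro ⟨I₁, I₂, ⟨-, hequi⟩, ⟨hT₁, -⟩, hS₂⟩
    obtain ⟨d₂⟩ : Nonempty I₂.Dom := by
      by_contra h
      exact hS₂ ⟨fun _ _ d => absurd ⟨d⟩ h, fun d => absurd ⟨d⟩ h⟩
    obtain ⟨d₁, -⟩ := hequi d₂
    exact ⟨I₁, ⟨d₁⟩, hT₁⟩

theorem satisfiable_iff_not_ELequisim_invariant {A R : Type}
    (T : Set (ALC A R × ALC A R)) (hfin : T.Finite)
    (Aa Bb : A) (rr : R) (hAB : Aa ≠ Bb)
    (hA : ∀ p ∈ T, Aa ∉ p.1.atoms ∧ Aa ∉ p.2.atoms)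
    (hB : ∀ p ∈ T, Bb ∉ p.1.atoms ∧ Bb ∉ p.2.atoms)
    (hr : ∀ p ∈ T, rr ∉ p.1.roles ∧ rr ∉ p.2.roles) :
    (∃ I : Interp A R, Nonempty I.Dom ∧ SatTBox I T) ↔
    (∃ I₁ I₂ : Interp A R, GlobalELEqui I₁ I₂ ∧
      SatExt T Aa Bb rr I₁ ∧ ¬ SatExt T Aa Bb rr I₂) :=
  satisfiable_iff_not_ELequisim_invariant_general T Aa Bb rr hA hB hr
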